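/- arXiv:1912.10989 — 2 statements merged into one kernel-verified Lean document; each statement's English description precedes it below -/
import Mathlib

section
/- Let G be a finite connected simple graph and W an edge clique cover of G. A graph H is a minimal triangulation of G if and only if (1) V(H) = V(G) and (2) there is a potential maximal clique Ω of G such that every connected component C_i of G \ Ω satisfies |W[C_i]| ≤ |W|/2, and E(H) equals the set of all pairs of vertices inside Ω together with the union of E(H_i) over the connected components C_i of G \ Ω, where each H_i is a minimal triangulation of the realization R(C_i). -/
/-!
A minimal triangulation `H` of `G` is determined by any maximal clique `Ω` of it: `H` is the
clique on `Ω` glued with the restrictions of `H` to the closed neighbourhoods `N[C]` of the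
components `C` of `G \ Ω`, and each restriction is a minimal triangulation of the realization
`R(C)`, since a smaller one could be glued back in. Conversely, gluing minimal triangulations of
the realizations onto a potential maximal clique `Ω` gives a chordal graph, because `Ω` and the
sets `N(C)` are clique separators; it is minimal because a triangulation below it must keep each
`N(C)` a clique (`N(C)` has a second full component, so it still separates) and hence keep `Ω` a
clique (every non-edge of `G` inside `Ω` lies in some `N(C)`).

The bound `|W[C]| ≤ |W| / 2` is a centroid argument: if a component `C` of `G \ Ω` is heavy,
chordality gives a vertex of `C` adjacent to all of `N(C)`, and a maximal clique containing it
and `N(C)` has all its heavy components strictly inside `C`.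
-/

open scoped Classical

namespace PaperECC

variable {V : Type*}

/-- `nbhd G X` is N(X): vertices outside `X` with a neighbor in `X`. -/
def nbhd (G : SimpleGraph V) (X : Set V) : Set V :=
  {v | v ∉ X ∧ ∃ u ∈ X, G.Adj u v}

/-- `closedNbhd G X` is N[X] = X ∪ N(X). -/
def closedNbhd (G : SimpleGraph V) (X : Set V) : Set V :=
  X ∪ nbhd G X

/-- closed neighborhood N[v] of a single vertex. -/
def vNbhd (G : SimpleGraph V) (v : V) : Set V :=
  insert v (G.neighborSet v)

/-- `IsCompOf G X C`: `C` is the vertex set of a connected component of `G \ X`. -/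
def IsCompOf (G : SimpleGraph V) (X C : Set V) : Prop :=
  C.Nonempty ∧ Disjoint C X ∧ (G.induce C).Connected ∧
    ∀ u ∈ C, ∀ v, v ∉ X → G.Adj u v → v ∈ C

/-- `C` is a full component of `X`: a component of `G \ X` with N(C) = X. -/
def IsFullCompOf (G : SimpleGraph V) (X C : Set V) : Prop :=
  IsCompOf G X C ∧ nbhd G C = X

/-- `S` is a minimal separator of `G`: it has at least two full components. -/
def IsMinSep (G : SimpleGraph V) (S : Set V) : Prop :=
  ∃ C D : Set V, C ≠ D ∧ IsFullCompOf G S C ∧ IsFullCompOf G S D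

/-- `C` is a block of `G`: a component of `G \ N(C)` whose neighborhood is a minimal separator. -/
def IsBlock (G : SimpleGraph V) (C : Set V) : Prop :=
  IsCompOf G (nbhd G C) C ∧ IsMinSep G (nbhd G C)

/-- `H` is chordal: every (injectively embedded) cycle on at least 4 vertices has a chord,
i.e. there is no induced cycle on four or more vertices. -/
def IsChordal (H : SimpleGraph V) : Prop :=
  ∀ n : ℕ, 4 ≤ n → ∀ f : ZMod n → V, Function.Injective f →
    (∀ i, H.Adj (f i) (f (i + 1))) →
    ∃ i j : ZMod n, i ≠ j ∧ j ≠ i + 1 ∧ i ≠ j + 1 ∧ H.Adj (f i) (f j)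

/-- `H` is a triangulation of `G` (on the same vertex set). -/
def IsTri (G H : SimpleGraph V) : Prop :=
  IsChordal H ∧ G ≤ H

/-- `H` is a minimal triangulation of `G`. -/
def IsMinTri (G H : SimpleGraph V) : Prop :=
  IsTri G H ∧ ∀ H' : SimpleGraph V, IsTri G H' → H' ≤ H → H' = H

/-- `Ω` is a maximal clique of `H`. -/
def IsMaxClique (H : SimpleGraph V) (Ω : Set V) : Prop :=
  H.IsClique Ω ∧ ∀ Ω' : Set V, H.IsClique Ω' → Ω ⊆ Ω' → Ω' = Ω

/-- `Ω` is a potential maximal clique of `G`: a maximal clique of some minimal triangulation. -/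
def IsPMC (G : SimpleGraph V) (Ω : Set V) : Prop :=
  ∃ H : SimpleGraph V, IsMinTri G H ∧ IsMaxClique H Ω

/-- `W` is an edge clique cover of `G`: a finite collection of cliques covering all edges. -/
def IsECC (G : SimpleGraph V) (W : Finset (Set V)) : Prop :=
  (∀ K ∈ W, G.IsClique K) ∧ ∀ u v : V, G.Adj u v → ∃ K ∈ W, u ∈ K ∧ v ∈ K

/-- `W[X]`: the cliques of `W` intersecting the vertex set `X`. -/
noncomputable def meeting (W : Finset (Set V)) (X : Set V) : Finset (Set V) :=
  W.filter (fun K => (K ∩ X).Nonempty)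

/-- `V(G, W')`: the vertices all of whose cliques (within `W`) belong to `W'`. -/
def partVerts (W W' : Finset (Set V)) : Set V :=
  {v | ∀ K ∈ W, v ∈ K → K ∈ W'}

/-- The connected components of the subgraph of `G` induced on a vertex set `Y`. -/
def compsOf (G : SimpleGraph V) (Y : Set V) : Set (Set V) :=
  {C | IsCompOf G Yᶜ C}

/-- `C(W')`: the components of the part `W'` of the edge clique cover `W`. -/
def partComps (G : SimpleGraph V) (W W' : Finset (Set V)) : Set (Set V) :=
  compsOf G (partVerts W W')

/-- `W'` is a good part of `W`: a nonempty subset all of whose components are blocks of `G`. -/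
def IsGoodPart (G : SimpleGraph V) (W W' : Finset (Set V)) : Prop :=
  W' ⊆ W ∧ W'.Nonempty ∧ ∀ C ∈ partComps G W W', IsBlock G C

/-- The realization `R(C)` of a block `C`, as a graph supported on `N[C]`:
edges of `G[N[C]]` together with all pairs inside `N(C)`. -/
def realization (G : SimpleGraph V) (C : Set V) : SimpleGraph V where
  Adj u v := u ≠ v ∧ u ∈ closedNbhd G C ∧ v ∈ closedNbhd G C ∧
    (G.Adj u v ∨ (u ∈ nbhd G C ∧ v ∈ nbhd G C))
  symm := by
    constructor
    intro u v h
    exact ⟨h.1.symm, h.2.2.1, h.2.1, h.2.2.2.elim (fun a => Or.inl a.symm)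
      (fun a => Or.inr ⟨a.2, a.1⟩)⟩
  loopless := ⟨fun u h => h.1 rfl⟩

/-- The complete graph on the vertex set `Ω` (supported on `Ω`): all pairs inside `Ω`. -/
def cliqueOn (Ω : Set V) : SimpleGraph V where
  Adj u v := u ≠ v ∧ u ∈ Ω ∧ v ∈ Ω
  symm := ⟨fun u v h => ⟨h.1.symm, h.2.2, h.2.1⟩⟩
  loopless := ⟨fun u h => h.1 rfl⟩

/-- The induced subgraph `G[A]`, as a graph supported on `A`. -/
def inducedOn (G : SimpleGraph V) (A : Set V) : SimpleGraph V where
  Adj u v := G.Adj u v ∧ u ∈ A ∧ v ∈ A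
  symm := ⟨fun u v h => ⟨h.1.symm, h.2.2, h.2.1⟩⟩
  loopless := ⟨fun u h => G.irrefl h.1⟩

/-- All edges of `H` lie inside the vertex set `A` (i.e. `H` has vertex set `A`). -/
def edgesWithin (H : SimpleGraph V) (A : Set V) : Prop :=
  ∀ u v : V, H.Adj u v → u ∈ A ∧ v ∈ A

/-- `H` is a triangulation of the graph `G'` with vertex set `A`. -/
def IsTriOn (G' : SimpleGraph V) (A : Set V) (H : SimpleGraph V) : Prop :=
  IsChordal H ∧ G' ≤ H ∧ edgesWithin H A

/-- `H` is a minimal triangulation of the graph `G'` with vertex set `A`. -/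
def IsMinTriOn (G' : SimpleGraph V) (A : Set V) (H : SimpleGraph V) : Prop :=
  IsTriOn G' A H ∧ ∀ H' : SimpleGraph V, IsTriOn G' A H' → H' ≤ H → H' = H

/-- `M` is a module of `G`. -/
def IsModule (G : SimpleGraph V) (M : Set V) : Prop :=
  ∀ v ∉ M, (∀ u ∈ M, G.Adj v u) ∨ (∀ u ∈ M, ¬ G.Adj v u)

section Components

variable {G : SimpleGraph V} {X C D : Set V}

lemma IsCompOf.disjoint (hC : IsCompOf G X C) : Disjoint C X := hC.2.1

lemma IsCompOf.connected (hC : IsCompOf G X C) : (G.induce C).Connected := hC.2.2.1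

lemma IsCompOf.closed (hC : IsCompOf G X C) {u v : V} (hu : u ∈ C) (hv : v ∉ X)
    (huv : G.Adj u v) : v ∈ C :=
  hC.2.2.2 u hu v hv huv

lemma IsCompOf.notMem (hC : IsCompOf G X C) {v : V} (hv : v ∈ C) : v ∉ X :=
  Set.disjoint_left.mp hC.disjoint hv

lemma IsCompOf.subset_of_connected (hD : IsCompOf G X D) (hC : (G.induce C).Connected)
    (hCX : Disjoint C X) (hCD : (C ∩ D).Nonempty) : C ⊆ D := by
  obtain ⟨x, hxC, hxD⟩ := hCD
  have walk_mem : ∀ (a b : C), (G.induce C).Walk a b → (a : V) ∈ D → (b : V) ∈ D := by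
    intro a b w
    induction w with
    | nil => exact id
    | cons h _ ih =>
      exact fun ha => ih (hD.closed ha (Set.disjoint_left.mp hCX (Subtype.mem _)) h)
  exact fun y hyC => walk_mem _ _ (hC.preconnected ⟨x, hxC⟩ ⟨y, hyC⟩).some hxD

lemma IsCompOf.eq_of_inter_nonempty (hC : IsCompOf G X C) (hD : IsCompOf G X D)
    (hCD : (C ∩ D).Nonempty) : C = D :=
  (hD.subset_of_connected hC.connected hC.disjoint hCD).antisymm
    (hC.subset_of_connected hD.connected hD.disjoint (Set.inter_comm C D ▸ hCD))

lemma IsCompOf.disjoint_of_ne (hC : IsCompOf G X C) (hD : IsCompOf G X D) (hne : C ≠ D) :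
    Disjoint C D :=
  Set.disjoint_iff_inter_eq_empty.mpr <| Set.not_nonempty_iff_eq_empty.mp
    fun h => hne (hC.eq_of_inter_nonempty hD h)

lemma exists_isCompOf_mem {v : V} (hv : v ∉ X) : ∃ C, IsCompOf G X C ∧ v ∈ C := by
  let r : V → V → Prop := fun a b => a ∉ X ∧ b ∉ X ∧ G.Adj a b
  let C := {w | Relation.ReflTransGen r v w}
  have hvC : v ∈ C := Relation.ReflTransGen.refl
  have not_mem : ∀ w ∈ C, w ∉ X := by
    intro w hw
    induction hw with
    | refl => exact hv
    | tail _ h _ => exact h.2.1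
  have reach : ∀ w (hw : w ∈ C), (G.induce C).Reachable ⟨v, hvC⟩ ⟨w, hw⟩ := by
    intro w hw
    induction hw with
    | refl => rfl
    | tail _ hbc ih => exact ih.trans (SimpleGraph.Adj.reachable hbc.2.2)
  refine ⟨C, ⟨⟨v, hvC⟩, Set.disjoint_left.mpr not_mem, ?_, ?_⟩, hvC⟩
  · exact (SimpleGraph.connected_iff_exists_forall_reachable _).mpr
      ⟨⟨v, hvC⟩, fun w => reach w w.2⟩
  · exact fun u hu w hw huw => Relation.ReflTransGen.tail hu ⟨not_mem u hu, hw, huw⟩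

lemma exists_adj_of_mem_nbhd {x : V} (hx : x ∈ nbhd G C) : ∃ c ∈ C, G.Adj x c := by
  obtain ⟨-, c, hc, hcx⟩ := hx
  exact ⟨c, hc, hcx.symm⟩

lemma IsCompOf.nbhd_subset (hC : IsCompOf G X C) : nbhd G C ⊆ X := by
  rintro x ⟨hxC, u, hu, hux⟩
  by_contra hx
  exact hxC (hC.closed hu hx hux)

lemma IsCompOf.isCompOf_nbhd (hC : IsCompOf G X C) : IsCompOf G (nbhd G C) C := by
  refine ⟨hC.1, Set.disjoint_left.mpr fun a ha hN => hN.1 ha, hC.connected, ?_⟩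
  intro u hu w hw huw
  by_contra hwC
  exact hw ⟨hwC, u, hu, huw⟩

lemma IsCompOf.mem_of_mem_closedNbhd (hC : IsCompOf G X C) {v : V}
    (hv : v ∈ closedNbhd G C) (hvX : v ∉ X) : v ∈ C :=
  hv.resolve_right fun h => hvX (hC.nbhd_subset h)

lemma IsCompOf.inter_closedNbhd_subset_nbhd (hC : IsCompOf G X C) :
    X ∩ closedNbhd G C ⊆ nbhd G C :=
  fun _ ⟨hX, hv⟩ => hv.resolve_left fun h => hC.notMem h hX

lemma IsCompOf.notMem_closedNbhd (hC : IsCompOf G X C) (hD : IsCompOf G X D) (hne : C ≠ D)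
    {v : V} (hv : v ∈ D) : v ∉ closedNbhd G C := by
  rintro (h | h)
  · exact Set.disjoint_left.mp (hC.disjoint_of_ne hD hne) h hv
  · exact hD.notMem hv (hC.nbhd_subset h)

lemma IsCompOf.closedNbhd_inter_subset_nbhd (hC : IsCompOf G X C) (hD : IsCompOf G X D)
    (hne : C ≠ D) : closedNbhd G C ∩ closedNbhd G D ⊆ nbhd G C := by
  rintro v ⟨hvC | hvC, hvD⟩
  · exact absurd hvD (hD.notMem_closedNbhd hC hne.symm hvC)
  · exact hvC

end Components

section ChordlessCycles

variable {H : SimpleGraph V} {A S : Set V}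

lemma natCast_ne_zero_of_lt {n m : ℕ} (hm : 0 < m) (hmn : m < n) : (m : ZMod n) ≠ 0 :=
  fun h => hm.ne' (Nat.eq_zero_of_dvd_of_lt ((ZMod.natCast_eq_zero_iff m n).mp h) hmn)

lemma nonconsecutive_add_natCast {n m : ℕ} (i : ZMod n) (hm : 2 ≤ m) (hmn : m + 2 ≤ n) :
    i ≠ i + m ∧ i + m ≠ i + 1 ∧ i ≠ i + m + 1 := by
  refine ⟨fun h => ?_, fun h => ?_, fun h => ?_⟩
  · exact natCast_ne_zero_of_lt (n := n) (m := m) (by omega) (by omega) (by linear_combination -h)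
  · refine natCast_ne_zero_of_lt (n := n) (m := m - 1) (by omega) (by omega) ?_
    rw [Nat.cast_sub (by omega)]
    push_cast
    linear_combination h
  · refine natCast_ne_zero_of_lt (n := n) (m := m + 1) (by omega) (by omega) ?_
    push_cast
    linear_combination -h

lemma val_add_one_eq_ite {n : ℕ} (hn : 2 ≤ n) (i : ZMod n) :
    (i + 1).val = if i.val + 1 = n then 0 else i.val + 1 := by
  have : NeZero n := ⟨by omega⟩
  rw [ZMod.val_add, ZMod.val_one_eq_one_mod, Nat.mod_eq_of_lt (by omega : 1 < n)]
  have := i.val_lt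
  split_ifs with h
  · rw [h, Nat.mod_self]
  · exact Nat.mod_eq_of_lt (by omega)

lemma IsChordal.exists_chord_of_closedWalk (hch : IsChordal H) {n : ℕ} (hn : 4 ≤ n)
    {F : ℕ → V} (hinj : Set.InjOn F (Set.Iio n)) (hadj : ∀ m < n, H.Adj (F m) (F (m + 1)))
    (hclose : F n = F 0) :
    ∃ a b, a + 2 ≤ b ∧ b < n ∧ ¬(a = 0 ∧ b = n - 1) ∧ H.Adj (F a) (F b) := by
  have : NeZero n := ⟨by omega⟩
  have hval : ∀ i j : ZMod n, j ≠ i + 1 → j.val ≠ if i.val + 1 = n then 0 else i.val + 1 :=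
    fun i j h hv => h (ZMod.val_injective n (hv.trans (val_add_one_eq_ite (by omega) i).symm))
  obtain ⟨i, j, hij, hji, hij', hchord⟩ := hch n hn (fun i => F i.val)
    (fun i j h => ZMod.val_injective n (hinj i.val_lt j.val_lt h)) fun i => by
      have := hadj i.val i.val_lt
      rw [val_add_one_eq_ite (by omega)]
      split_ifs with h
      · rwa [h, hclose] at this
      · exact this
  have hi := hval i j hji
  have hj := hval j i hij'
  have hne : i.val ≠ j.val := fun h => hij (ZMod.val_injective n h)
  have := i.val_lt
  have := j.val_lt
  rcases hne.lt_or_gt with hlt | hlt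
  · exact ⟨i.val, j.val, by split_ifs at hi hj <;> omega, j.val_lt,
      by split_ifs at hi hj <;> omega, hchord⟩
  · exact ⟨j.val, i.val, by split_ifs at hi hj <;> omega, i.val_lt,
      by split_ifs at hi hj <;> omega, hchord.symm⟩

def IsChordalOn (A : SimpleGraph V) (S : Set V) : Prop :=
  ∀ n : ℕ, 4 ≤ n → ∀ f : ZMod n → V, Function.Injective f →
    (∀ i, A.Adj (f i) (f (i + 1))) → (∀ i, f i ∈ S) →
    ∃ i j : ZMod n, i ≠ j ∧ j ≠ i + 1 ∧ i ≠ j + 1 ∧ A.Adj (f i) (f j)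

lemma isChordalOn_of_isClique (hS : H.IsClique S) : IsChordalOn H S := by
  intro n hn f hf _ hmem
  obtain ⟨h1, h2, h3⟩ := nonconsecutive_add_natCast (0 : ZMod n) le_rfl hn
  exact ⟨0, 0 + (2 : ℕ), h1, h2, h3, hS (hmem _) (hmem _) (hf.ne h1)⟩

/-- Walks are encoded as `ℕ`-indexed sequences `g 0 = x, …, g k = y`, so that they can be
spliced and closed up into the `ZMod n`-indexed cycles of `IsChordal`. -/
structure IsWalkThrough (H : SimpleGraph V) (A : Set V) (x y : V) (k : ℕ) (g : ℕ → V) :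
    Prop where
  start : g 0 = x
  finish : g k = y
  adj : ∀ i < k, H.Adj (g i) (g (i + 1))
  mem : ∀ i, 0 < i → i < k → g i ∈ A

lemma IsWalkThrough.single {x y : V} (h : H.Adj x y) (A : Set V) :
    ∃ g, IsWalkThrough H A x y 1 g :=
  ⟨fun i => if i = 0 then x else y, rfl, rfl,
    fun i hi => by simpa [Nat.lt_one_iff.mp hi] using h, fun i h0 h1 => by omega⟩

lemma IsWalkThrough.append {x y z : V} {k l : ℕ} {g g' : ℕ → V}
    (h : IsWalkThrough H A x y k g) (h' : IsWalkThrough H A y z l g') (hy : y ∈ A) :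
    ∃ g'', IsWalkThrough H A x z (k + l) g'' := by
  let F : ℕ → V := fun i => if i ≤ k then g i else g' (i - k)
  have hleft : ∀ i ≤ k, F i = g i := fun i hi => if_pos hi
  have hright : ∀ i, k ≤ i → F i = g' (i - k) := by
    intro i hi
    by_cases hik : i ≤ k
    · rw [hleft i hik, show i = k by omega, h.finish, Nat.sub_self, h'.start]
    · exact if_neg hik
  refine ⟨F, by rw [hleft 0 (Nat.zero_le k), h.start], ?_, fun i hi => ?_, fun i h0 hi => ?_⟩
  · rw [hright _ (by omega), Nat.add_sub_cancel_left, h'.finish]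
  · rcases Nat.lt_or_ge i k with hik | hik
    · rw [hleft i hik.le, hleft (i + 1) hik]
      exact h.adj i hik
    · rw [hright i hik, hright (i + 1) (by omega), show i + 1 - k = i - k + 1 by omega]
      exact h'.adj _ (by omega)
  · rcases lt_trichotomy i k with hik | rfl | hik
    · rw [hleft i hik.le]
      exact h.mem i h0 hik
    · rwa [hleft i le_rfl, h.finish]
    · rw [hright i hik.le]
      exact h'.mem _ (by omega) (by omega)

lemma IsWalkThrough.shortcut {x y : V} {k a d : ℕ} {g : ℕ → V} (h : IsWalkThrough H A x y k g)
    (had : a + d ≤ k) (hjoin : a + d < k → H.Adj (g a) (g (a + d + 1)))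
    (hend : a + d = k → g a = y) : ∃ g', IsWalkThrough H A x y (k - d) g' := by
  refine ⟨fun i => if i ≤ a then g i else g (i + d), ?_, ?_, fun i hi => ?_, fun i h0 hi => ?_⟩
  · rw [if_pos (Nat.zero_le a), h.start]
  · split_ifs with hk
    · rw [show k - d = a by omega]
      exact hend (by omega)
    · rw [show k - d + d = k by omega, h.finish]
  · split_ifs with h1 h2 h2
    · exact h.adj i (by omega)
    · rw [show i = a by omega, show a + 1 + d = a + d + 1 by omega]
      exact hjoin (by omega)
    · omega
    · rw [show i + 1 + d = i + d + 1 by omega]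
      exact h.adj _ (by omega)
  · split_ifs
    · exact h.mem i h0 (by omega)
    · exact h.mem _ (by omega) (by omega)

lemma exists_isWalkThrough_of_reachable {G : SimpleGraph V} (hGH : G ≤ H) {c c' : V}
    (hc : c ∈ A) (hc' : c' ∈ A) (h : (G.induce A).Reachable ⟨c, hc⟩ ⟨c', hc'⟩) :
    ∃ k g, IsWalkThrough H A c c' k g := by
  suffices ∀ a b : A, (G.induce A).Walk a b → ∃ k g, IsWalkThrough H A a b k g from
    this _ _ h.some
  intro a b w
  induction w with
  | nil => exact ⟨0, fun _ => _, rfl, rfl, fun i hi => absurd hi (Nat.not_lt_zero i),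
      fun i _ hi => absurd hi (Nat.not_lt_zero i)⟩
  | @cons a b _ hab _ ih =>
    obtain ⟨k, g, hg⟩ := ih
    obtain ⟨g₁, hg₁⟩ := IsWalkThrough.single (hGH hab) A
    obtain ⟨g₂, hg₂⟩ := hg₁.append hg b.2
    exact ⟨_, g₂, hg₂⟩

lemma exists_isWalkThrough_of_connected {G : SimpleGraph V} (hGH : G ≤ H)
    (hA : (G.induce A).Connected) {x y : V} (hx : ∃ c ∈ A, G.Adj x c)
    (hy : ∃ c ∈ A, G.Adj y c) : ∃ k g, IsWalkThrough H A x y k g := by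
  obtain ⟨c, hc, hxc⟩ := hx
  obtain ⟨c', hc', hyc'⟩ := hy
  obtain ⟨k, g, hg⟩ := exists_isWalkThrough_of_reachable hGH hc hc' (hA.preconnected _ _)
  obtain ⟨g₁, hg₁⟩ := IsWalkThrough.single (hGH hxc) A
  obtain ⟨g₂, hg₂⟩ := IsWalkThrough.single (hGH hyc'.symm) A
  obtain ⟨g₃, hg₃⟩ := hg₁.append hg hc
  obtain ⟨g₄, hg₄⟩ := hg₃.append hg₂ hc'
  exact ⟨_, g₄, hg₄⟩

structure IsInducedPath (H : SimpleGraph V) (k : ℕ) (g : ℕ → V) : Prop where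
  adj : ∀ i < k, H.Adj (g i) (g (i + 1))
  injOn : Set.InjOn g (Set.Iic k)
  not_adj : ∀ a b, a + 2 ≤ b → b ≤ k → ¬H.Adj (g a) (g b)

lemma IsInducedPath.take {k i : ℕ} {g : ℕ → V} (hg : IsInducedPath H k g) (hik : i ≤ k) :
    IsInducedPath H i g :=
  ⟨fun j hj => hg.adj j (by omega), hg.injOn.mono (Set.Iic_subset_Iic.mpr hik),
    fun a b hab hb => hg.not_adj a b hab (by omega)⟩

/-- A shortest walk is an induced path. -/
lemma IsWalkThrough.exists_isInducedPath {x y : V} {k : ℕ} {g : ℕ → V}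
    (h : IsWalkThrough H A x y k g) (hxy : x ≠ y) (hnadj : ¬H.Adj x y) :
    ∃ k g, 2 ≤ k ∧ IsWalkThrough H A x y k g ∧ IsInducedPath H k g := by
  have hex : ∃ k g, IsWalkThrough H A x y k g := ⟨k, g, h⟩
  obtain ⟨g, hg⟩ := Nat.find_spec hex
  have hmin : ∀ {m g'}, IsWalkThrough H A x y m g' → Nat.find hex ≤ m :=
    fun h' => Nat.find_min' hex ⟨_, h'⟩
  have h0 : Nat.find hex ≠ 0 := fun h0 => hxy (by rw [← hg.start, ← hg.finish, h0])
  have h1 : Nat.find hex ≠ 1 := fun h1 => hnadj (by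
    have := hg.adj 0 (by omega)
    rwa [zero_add, ← h1, hg.start, hg.finish] at this)
  refine ⟨Nat.find hex, g, by omega, hg, hg.adj, fun a ha b hb hab => ?_, fun a b hab hb hadj => ?_⟩
  · simp only [Set.mem_Iic] at ha hb
    by_contra hne
    wlog hlt : a < b generalizing a b
    · exact this b a hab.symm hb ha (Ne.symm hne) (by omega)
    have hjoin : a + (b - a) < Nat.find hex → H.Adj (g a) (g (a + (b - a) + 1)) := fun _ => by
      rw [hab, show a + (b - a) + 1 = b + 1 by omega]
      exact hg.adj b (by omega)
    have hend : a + (b - a) = Nat.find hex → g a = y := fun hb' => by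
      rw [hab, show b = Nat.find hex by omega, hg.finish]
    obtain ⟨g', hg'⟩ := hg.shortcut (by omega) hjoin hend
    have := hmin hg'
    omega
  · have hjoin : a + (b - a - 1) < Nat.find hex → H.Adj (g a) (g (a + (b - a - 1) + 1)) :=
      fun _ => by rwa [show a + (b - a - 1) + 1 = b by omega]
    obtain ⟨g', hg'⟩ := hg.shortcut (by omega) hjoin (fun _ => by omega)
    have := hmin hg'
    omega

lemma exists_closedWalk_of_paths {k l : ℕ} {g g' : ℕ → V}
    (hadj : ∀ i < k, H.Adj (g i) (g (i + 1))) (hadj' : ∀ i < l, H.Adj (g' i) (g' (i + 1)))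
    (hinj : Set.InjOn g (Set.Iic k)) (hinj' : Set.InjOn g' (Set.Iic l))
    (hstart : g 0 = g' 0) (hfinish : g k = g' l)
    (hdisj : ∀ i j, 0 < i → i < k → 0 < j → j < l → g i ≠ g' j) :
    ∃ F : ℕ → V, (∀ m ≤ k, F m = g m) ∧ (∀ m, k ≤ m → F m = g' (k + l - m)) ∧
      Set.InjOn F (Set.Iio (k + l)) ∧ (∀ m < k + l, H.Adj (F m) (F (m + 1))) ∧
      F (k + l) = F 0 := by
  let F : ℕ → V := fun m => if m ≤ k then g m else g' (k + l - m)
  have hleft : ∀ m ≤ k, F m = g m := fun m hm => if_pos hm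
  have hright : ∀ m, k ≤ m → F m = g' (k + l - m) := by
    intro m hm
    by_cases hmk : m ≤ k
    · rw [hleft m hmk, show m = k by omega, hfinish, show k + l - k = l by omega]
    · exact if_neg hmk
  have mem_g : ∀ {m}, m ≤ k → m ∈ Set.Iic k := fun hm => hm
  have mem_g' : ∀ {m}, m ≤ l → m ∈ Set.Iic l := fun hm => hm
  refine ⟨F, hleft, hright, fun a ha b hb hab => ?_, fun m hm => ?_, ?_⟩
  · simp only [Set.mem_Iio] at ha hb
    wlog hle : a ≤ b generalizing a b
    · exact (this b a hab.symm hb ha (by omega)).symm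
    by_cases hbk : b ≤ k
    · rw [hleft a (by omega), hleft b hbk] at hab
      exact hinj (mem_g (by omega)) (mem_g hbk) hab
    by_cases hka : k ≤ a
    · rw [hright a hka, hright b (by omega)] at hab
      have := hinj' (mem_g' (by omega)) (mem_g' (by omega)) hab
      omega
    rw [hleft a (by omega), hright b (by omega)] at hab
    rcases Nat.eq_zero_or_pos a with rfl | ha0
    · have := hinj' (mem_g' (Nat.zero_le l)) (mem_g' (by omega)) (hstart ▸ hab)
      omega
    · exact absurd hab (hdisj a _ ha0 (by omega) (by omega) (by omega))
  · rcases Nat.lt_or_ge m k with hmk | hmk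
    · rw [hleft m hmk.le, hleft (m + 1) hmk]
      exact hadj m hmk
    · rw [hright m hmk, hright (m + 1) (by omega)]
      have := hadj' (k + l - (m + 1)) (by omega)
      rwa [show k + l - (m + 1) + 1 = k + l - m by omega, H.adj_comm] at this
  · rw [hright _ (by omega), hleft 0 (Nat.zero_le k), Nat.sub_self, hstart]

/-- Two induced paths with common ends whose interiors are disjoint and non-adjacent
close up into a chordless cycle. -/
lemma IsChordal.false_of_isInducedPath_pair (hch : IsChordal H) {k l : ℕ} {g g' : ℕ → V}
    (hg : IsInducedPath H k g) (hg' : IsInducedPath H l g') (hk : 2 ≤ k) (hl : 2 ≤ l)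
    (hstart : g 0 = g' 0) (hfinish : g k = g' l)
    (hinner : ∀ i j, 0 < i → i < k → 0 < j → j < l → g i ≠ g' j ∧ ¬H.Adj (g i) (g' j)) :
    False := by
  obtain ⟨F, hleft, hright, hinj, hadj, hclose⟩ :=
    exists_closedWalk_of_paths hg.adj hg'.adj hg.injOn hg'.injOn hstart hfinish
      fun i j hi hik hj hjl => (hinner i j hi hik hj hjl).1
  obtain ⟨a, b, hab, hb, hwrap, hchord⟩ :=
    hch.exists_chord_of_closedWalk (by omega) hinj hadj hclose
  by_cases hbk : b ≤ k
  · rw [hleft a (by omega), hleft b hbk] at hchord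
    exact hg.not_adj a b hab hbk hchord
  by_cases hka : k ≤ a
  · rw [hright a hka, hright b (by omega)] at hchord
    exact hg'.not_adj _ _ (by omega) (by omega) hchord.symm
  rw [hleft a (by omega), hright b (by omega)] at hchord
  rcases Nat.eq_zero_or_pos a with rfl | ha0
  · exact hg'.not_adj 0 _ (by omega) (by omega) (hstart ▸ hchord)
  · exact (hinner a _ ha0 (by omega) (by omega) (by omega)).2 hchord

lemma IsChordal.false_of_apex (hch : IsChordal H) {k : ℕ} {g : ℕ → V}
    (hg : IsInducedPath H k g) (hk : 2 ≤ k) {t : V} (ht0 : H.Adj (g 0) t)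
    (htk : H.Adj (g k) t) (hne : ∀ i ≤ k, g i ≠ t)
    (hnadj : ∀ i, 0 < i → i < k → ¬H.Adj (g i) t) : False := by
  let g' : ℕ → V := fun i => if i = 0 then g 0 else if i = 1 then t else g k
  have h0k : g 0 ≠ g k := fun h => by
    have := hg.injOn (Set.mem_Iic.mpr (Nat.zero_le k)) (Set.mem_Iic.mpr le_rfl) h
    omega
  have h0t := hne 0 (Nat.zero_le k)
  have hkt := hne k le_rfl
  have hg' : IsInducedPath H 2 g' := by
    refine ⟨fun i hi => ?_, fun a ha b hb hab => ?_, fun a b hab hb => ?_⟩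
    · interval_cases i
      · simpa [g'] using ht0
      · simpa [g'] using htk.symm
    · simp only [Set.mem_Iic] at ha hb
      interval_cases a <;> interval_cases b <;>
        simp_all [g', Ne.symm h0t, Ne.symm hkt, Ne.symm h0k]
    · obtain rfl : a = 0 := by omega
      obtain rfl : b = 2 := by omega
      simpa [g'] using hg.not_adj 0 k hk le_rfl
  refine hch.false_of_isInducedPath_pair hg hg' hk le_rfl (by simp [g']) (by simp [g'])
    fun i j hi hik hj hjl => ?_
  obtain rfl : j = 1 := by omega
  simpa [g'] using ⟨hne i hik.le, hnadj i hi hik⟩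

/-- The first vertex of the path after `g 0` that is adjacent to `t` closes a cycle through
`t`, which is chordless unless that vertex is `g 1`. -/
lemma IsChordal.adj_of_adj_ends (hch : IsChordal H) {k : ℕ} {g : ℕ → V}
    (hg : IsInducedPath H k g) (hk : 0 < k) {t : V} (ht0 : H.Adj (g 0) t)
    (htk : H.Adj (g k) t) (hne : ∀ i ≤ k, g i ≠ t) : H.Adj (g 1) t := by
  have hex : ∃ i, 0 < i ∧ H.Adj (g i) t := ⟨k, hk, htk⟩
  obtain ⟨hi0, hit⟩ := Nat.find_spec hex
  have hik : Nat.find hex ≤ k := Nat.find_min' hex ⟨hk, htk⟩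
  by_contra h1
  have hi1 : Nat.find hex ≠ 1 := fun h => h1 (h ▸ hit)
  exact hch.false_of_apex (hg.take hik) (by omega) ht0 hit (fun i hi => hne i (hi.trans hik))
    fun i hi0 hi => (Nat.find_min hex hi ⟨hi0, ·⟩)

lemma IsChordal.adj_of_connected_sets {G : SimpleGraph V} (hch : IsChordal H) (hGH : G ≤ H)
    {C D : Set V} {x y : V} (hxy : x ≠ y) (hC : (G.induce C).Connected)
    (hD : (G.induce D).Connected) (hCD : Disjoint C D) (hno : ∀ c ∈ C, ∀ d ∈ D, ¬H.Adj c d)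
    (hxC : ∃ c ∈ C, G.Adj x c) (hyC : ∃ c ∈ C, G.Adj y c)
    (hxD : ∃ d ∈ D, G.Adj x d) (hyD : ∃ d ∈ D, G.Adj y d) : H.Adj x y := by
  by_contra hnadj
  obtain ⟨_, _, hwC⟩ := exists_isWalkThrough_of_connected hGH hC hxC hyC
  obtain ⟨_, _, hwD⟩ := exists_isWalkThrough_of_connected hGH hD hxD hyD
  obtain ⟨k, g, hk, hgC, hg⟩ := hwC.exists_isInducedPath hxy hnadj
  obtain ⟨l, g', hl, hgD, hg'⟩ := hwD.exists_isInducedPath hxy hnadj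
  refine hch.false_of_isInducedPath_pair hg hg' hk hl (hgC.start.trans hgD.start.symm)
    (hgC.finish.trans hgD.finish.symm) fun i j hi hik hj hjl => ⟨fun h => ?_, ?_⟩
  · exact Set.disjoint_left.mp hCD (hgC.mem i hi hik) (h ▸ hgD.mem j hj hjl)
  · exact hno _ (hgC.mem i hi hik) _ (hgD.mem j hj hjl)

/-- Induction on `S`: for a new vertex `s` and a vertex `c₀ ∈ C` seeing the rest of `S`, the
second vertex of an induced `s`-`c₀` path through `C` sees all of `S`. -/
lemma IsChordal.exists_forall_adj_of_isClique {G : SimpleGraph V} (hch : IsChordal H)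
    (hGH : G ≤ H) {S C : Set V} (hS : S.Finite) (hSH : H.IsClique S) (hSC : Disjoint S C)
    (hC : (G.induce C).Connected) (hatt : ∀ s ∈ S, ∃ c ∈ C, G.Adj s c) :
    ∃ c ∈ C, ∀ s ∈ S, H.Adj c s := by
  induction S, hS using Set.Finite.induction_on with
  | empty =>
    obtain ⟨⟨c, hc⟩⟩ := hC.nonempty
    exact ⟨c, hc, by simp⟩
  | @insert s S hsS _ ih =>
    have hSs : S ⊆ insert s S := Set.subset_insert s S
    obtain ⟨c₀, hc₀, hc₀S⟩ := ih (hSH.subset hSs) (hSC.mono_left hSs)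
      fun t ht => hatt t (hSs ht)
    by_cases hc₀s : H.Adj c₀ s
    · exact ⟨c₀, hc₀, Set.forall_mem_insert.mpr ⟨hc₀s, hc₀S⟩⟩
    have hsC : s ∉ C := Set.disjoint_left.mp hSC (Set.mem_insert s S)
    obtain ⟨c, hc, hsc⟩ := hatt s (Set.mem_insert s S)
    obtain ⟨_, _, hw₀⟩ := exists_isWalkThrough_of_reachable hGH hc hc₀ (hC.preconnected _ _)
    obtain ⟨_, hw₁⟩ := IsWalkThrough.single (hGH hsc) C
    obtain ⟨_, hw⟩ := hw₁.append hw₀ hc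
    obtain ⟨k, g, hk, hgC, hg⟩ :=
      hw.exists_isInducedPath (fun h => hsC (h ▸ hc₀)) fun h => hc₀s h.symm
    have hgC' : ∀ i, 0 < i → i ≤ k → g i ∈ C := fun i hi hik => by
      rcases hik.lt_or_eq with hik | rfl
      · exact hgC.mem i hi hik
      · exact hgC.finish ▸ hc₀
    refine ⟨g 1, hgC' 1 one_pos (by omega), Set.forall_mem_insert.mpr ⟨?_, fun t htS => ?_⟩⟩
    · simpa [hgC.start, H.adj_comm] using hg.adj 0 (by omega)
    have htC : t ∉ C := Set.disjoint_left.mp hSC (hSs htS)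
    refine hch.adj_of_adj_ends hg (by omega) ?_ (hgC.finish ▸ hc₀S t htS) fun i hi => ?_
    · rw [hgC.start]
      exact hSH (Set.mem_insert s S) (hSs htS) fun h => hsS (h ▸ htS)
    · rcases Nat.eq_zero_or_pos i with rfl | hi0
      · exact hgC.start ▸ fun h => hsS (h ▸ htS)
      · exact fun h => htC (h ▸ hgC' i hi0 hi)

end ChordlessCycles

section CliqueSeparators

variable {G A : SimpleGraph V} {Ω : Set V}

lemma exists_first_exit {p q : ℕ → Prop} (hpq : ∀ m, p m → q m) (hstep : ∀ m, p m → q (m + 1))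
    (h0 : p 0) {K : ℕ} (hK : ¬q K) : ∃ m, 0 < m ∧ m < K ∧ q m ∧ ¬p m := by
  have hex : ∃ m, ¬p m := ⟨K, fun h => hK (hpq K h)⟩
  have hpos : 0 < Nat.find hex := Nat.pos_of_ne_zero fun h => Nat.find_spec hex (h ▸ h0)
  have hq : q (Nat.find hex) := by
    have := hstep _ (not_not.mp (Nat.find_min hex (Nat.sub_lt hpos one_pos)))
    rwa [Nat.sub_add_cancel (show 1 ≤ Nat.find hex from hpos)] at this
  exact ⟨Nat.find hex, hpos, (Nat.find_min' hex fun h => hK (hpq K h)).lt_of_ne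
    fun h => hK (h ▸ hq), hq, Nat.find_spec hex⟩

/-- The two positions are the first exits from `P` forwards and backwards from `a`. -/
lemma exists_nonconsecutive_of_exit {n : ℕ} (hn : 4 ≤ n) {P Q : ZMod n → Prop}
    (hPQ : ∀ i, P i → Q i) (hstep : ∀ i, P i → Q (i + 1) ∧ Q (i - 1)) {a b : ZMod n}
    (ha : P a) (hb : ¬Q b) :
    ∃ i j, i ≠ j ∧ j ≠ i + 1 ∧ i ≠ j + 1 ∧ (Q i ∧ ¬P i) ∧ Q j ∧ ¬P j := by
  have : NeZero n := ⟨by omega⟩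
  set K := (b - a).val
  have hK : a + (K : ZMod n) = b := by simp [K]
  have hKn : K < n := ZMod.val_lt _
  have hK' : a - ((n - K : ℕ) : ZMod n) = b := by
    rw [Nat.cast_sub hKn.le, ZMod.natCast_self, ← hK]
    ring
  obtain ⟨p, hp0, hpK, hQp, hPp⟩ := exists_first_exit (p := fun m => P (a + m))
    (q := fun m => Q (a + m)) (fun m => hPQ _) (fun m h => by simpa [add_assoc] using (hstep _ h).1)
    (by simpa using ha) (K := K) (by rwa [hK])
  obtain ⟨q, hq0, hqK, hQq, hPq⟩ := exists_first_exit (p := fun m => P (a - m))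
    (q := fun m => Q (a - m)) (fun m => hPQ _) (fun m h => by simpa [sub_sub] using (hstep _ h).2)
    (by simpa using ha) (K := n - K) (by rwa [hK'])
  obtain ⟨h1, h2, h3⟩ := nonconsecutive_add_natCast (a - (q : ZMod n)) (m := p + q) (by omega) (by omega)
  have hpq : a - q + ((p + q : ℕ) : ZMod n) = a + p := by
    push_cast
    ring
  rw [hpq] at h1 h2 h3
  exact ⟨a - q, a + p, h1, h2, h3, ⟨hQq, hPq⟩, hQp, hPp⟩

/-- A cycle leaving `Ω` enters some component `C`; if it also leaves `N[C]`, it crosses the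
clique `N(C)` twice, at non-consecutive positions. -/
lemma isChordal_of_isChordalOn_separator
    (hedge : ∀ u v, A.Adj u v → (u ∈ Ω ∧ v ∈ Ω) ∨
      ∃ C, IsCompOf G Ω C ∧ u ∈ closedNbhd G C ∧ v ∈ closedNbhd G C)
    (hsep : ∀ C, IsCompOf G Ω C → A.IsClique (nbhd G C)) (hΩ : IsChordalOn A Ω)
    (hcomp : ∀ C, IsCompOf G Ω C → IsChordalOn A (closedNbhd G C)) : IsChordal A := by
  intro n hn f hf hadj
  by_cases hfΩ : ∀ i, f i ∈ Ω
  · exact hΩ n hn f hf hadj hfΩ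
  obtain ⟨a, ha⟩ := not_forall.mp hfΩ
  obtain ⟨C, hC, haC⟩ := exists_isCompOf_mem (G := G) ha
  by_cases hfC : ∀ i, f i ∈ closedNbhd G C
  · exact hcomp C hC n hn f hf hadj hfC
  obtain ⟨b, hb⟩ := not_forall.mp hfC
  have hstay : ∀ u v, u ∈ C → A.Adj u v → v ∈ closedNbhd G C := by
    intro u v hu huv
    rcases hedge u v huv with ⟨hu', -⟩ | ⟨C', hC', hu', hv'⟩
    · exact absurd hu' (hC.notMem hu)
    · rwa [hC.eq_of_inter_nonempty hC' ⟨u, hu, hC'.mem_of_mem_closedNbhd hu' (hC.notMem hu)⟩]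
  obtain ⟨i, j, hij, hji, hij', ⟨hi, hi'⟩, hj, hj'⟩ := exists_nonconsecutive_of_exit hn
    (P := fun i => f i ∈ C) (Q := fun i => f i ∈ closedNbhd G C) (fun i h => Or.inl h)
    (fun i h => ⟨hstay _ _ h (hadj i), hstay _ _ h (by simpa using (hadj (i - 1)).symm)⟩)
    haC hb
  exact ⟨i, j, hij, hji, hij', hsep C hC (hi.resolve_left hi') (hj.resolve_left hj') (hf.ne hij)⟩

end CliqueSeparators

section Glue

variable {G H : SimpleGraph V} {Ω C : Set V} {K : Set V → SimpleGraph V}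

def glue (G : SimpleGraph V) (Ω : Set V) (K : Set V → SimpleGraph V) : SimpleGraph V :=
  cliqueOn Ω ⊔ ⨆ C ∈ {D : Set V | IsCompOf G Ω D}, K C

def TriangulatesComps (G : SimpleGraph V) (Ω : Set V) (K : Set V → SimpleGraph V) : Prop :=
  ∀ C, IsCompOf G Ω C → IsTriOn (realization G C) (closedNbhd G C) (K C)

lemma glue_adj {u v : V} :
    (glue G Ω K).Adj u v ↔ (cliqueOn Ω).Adj u v ∨ ∃ C, IsCompOf G Ω C ∧ (K C).Adj u v := by
  simp [glue, SimpleGraph.iSup_adj]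

lemma cliqueOn_le_glue : cliqueOn Ω ≤ glue G Ω K := le_sup_left

lemma le_glue (hC : IsCompOf G Ω C) : K C ≤ glue G Ω K :=
  fun _ _ h => glue_adj.mpr (Or.inr ⟨C, hC, h⟩)

lemma cliqueOn_le (hΩ : H.IsClique Ω) : cliqueOn Ω ≤ H :=
  fun _ _ h => hΩ h.2.1 h.2.2 h.1

lemma glue_le (hΩ : H.IsClique Ω) (hK : ∀ C, IsCompOf G Ω C → K C ≤ H) : glue G Ω K ≤ H :=
  sup_le (cliqueOn_le hΩ) (iSup₂_le hK)

lemma cliqueOn_nbhd_le_realization : cliqueOn (nbhd G C) ≤ realization G C :=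
  fun _ _ h => ⟨h.1, Or.inr h.2.1, Or.inr h.2.2, Or.inr h.2⟩

lemma realization_adj_of_mem {u v : V} (hu : u ∈ C) (huv : G.Adj u v) :
    (realization G C).Adj u v := by
  refine ⟨huv.ne, Or.inl hu, ?_, Or.inl huv⟩
  by_cases hv : v ∈ C
  · exact Or.inl hv
  · exact Or.inr ⟨hv, u, hu, huv⟩

lemma glue_adj_of_mem (hK : TriangulatesComps G Ω K) (hC : IsCompOf G Ω C) {u v : V}
    (hu : u ∈ C) (h : (glue G Ω K).Adj u v) : (K C).Adj u v := by
  rcases glue_adj.mp h with h | ⟨D, hD, h⟩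
  · exact absurd h.2.1 (hC.notMem hu)
  · have huD := hD.mem_of_mem_closedNbhd ((hK D hD).2.2 u v h).1 (hC.notMem hu)
    rwa [hC.eq_of_inter_nonempty hD ⟨u, hu, huD⟩]

lemma glue_adj_of_mem_closedNbhd (hK : TriangulatesComps G Ω K) (hC : IsCompOf G Ω C)
    {u v : V} (hu : u ∈ closedNbhd G C) (hv : v ∈ closedNbhd G C)
    (h : (glue G Ω K).Adj u v) : (K C).Adj u v := by
  have hnbhd : u ∈ nbhd G C → v ∈ nbhd G C → (K C).Adj u v := fun hu' hv' =>
    (hK C hC).2.1 (cliqueOn_nbhd_le_realization ⟨h.ne, hu', hv'⟩)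
  rcases glue_adj.mp h with h | ⟨D, hD, h⟩
  · exact hnbhd (hC.inter_closedNbhd_subset_nbhd ⟨h.2.1, hu⟩)
      (hC.inter_closedNbhd_subset_nbhd ⟨h.2.2, hv⟩)
  · by_cases hDC : D = C
    · exact hDC ▸ h
    · have hD' := (hK D hD).2.2 u v h
      exact hnbhd (hC.closedNbhd_inter_subset_nbhd hD (Ne.symm hDC) ⟨hu, hD'.1⟩)
        (hC.closedNbhd_inter_subset_nbhd hD (Ne.symm hDC) ⟨hv, hD'.2⟩)

lemma le_glue_of_realization (hK : ∀ C, IsCompOf G Ω C → realization G C ≤ K C) :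
    G ≤ glue G Ω K := by
  intro u v huv
  by_cases hu : u ∈ Ω
  · by_cases hv : v ∈ Ω
    · exact cliqueOn_le_glue ⟨huv.ne, hu, hv⟩
    · obtain ⟨C, hC, hvC⟩ := exists_isCompOf_mem (G := G) hv
      exact le_glue hC (hK C hC (realization_adj_of_mem hvC huv.symm)).symm
  · obtain ⟨C, hC, huC⟩ := exists_isCompOf_mem (G := G) hu
    exact le_glue hC (hK C hC (realization_adj_of_mem huC huv))

lemma isTri_glue (hK : TriangulatesComps G Ω K) : IsTri G (glue G Ω K) := by
  refine ⟨isChordal_of_isChordalOn_separator (G := G) (Ω := Ω) (fun u v h => ?_) ?_ ?_ ?_,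
    le_glue_of_realization fun C hC => (hK C hC).2.1⟩
  · rcases glue_adj.mp h with h | ⟨C, hC, h⟩
    · exact Or.inl h.2
    · exact Or.inr ⟨C, hC, (hK C hC).2.2 u v h⟩
  · exact fun C hC x hx y hy hxy =>
      cliqueOn_le_glue ⟨hxy, hC.nbhd_subset hx, hC.nbhd_subset hy⟩
  · exact isChordalOn_of_isClique fun x hx y hy hxy => cliqueOn_le_glue ⟨hxy, hx, hy⟩
  · intro C hC n hn f hf hadj hmem
    obtain ⟨i, j, hij, hji, hij', hchord⟩ := (hK C hC).1 n hn f hf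
      fun i => glue_adj_of_mem_closedNbhd hK hC (hmem i) (hmem (i + 1)) (hadj i)
    exact ⟨i, j, hij, hji, hij', le_glue hC hchord⟩

end Glue

section Decomposition

variable {G H : SimpleGraph V} {Ω C : Set V}

lemma inducedOn_le {A : Set V} : inducedOn H A ≤ H := fun _ _ h => h.1

lemma IsChordal.inducedOn (hH : IsChordal H) (A : Set V) : IsChordal (inducedOn H A) := by
  intro n hn f hf hadj
  obtain ⟨i, j, hij, hji, hij', hchord⟩ := hH n hn f hf fun i => (hadj i).1
  exact ⟨i, j, hij, hji, hij', hchord, (hadj i).2.1, (hadj j).2.1⟩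

lemma triangulatesComps_inducedOn (hH : IsTri G H) (hΩ : H.IsClique Ω) :
    TriangulatesComps G Ω fun C => inducedOn H (closedNbhd G C) := by
  refine fun C hC => ⟨hH.1.inducedOn _, fun u v ⟨huv, hu, hv, h⟩ => ⟨?_, hu, hv⟩,
    fun u v h => h.2⟩
  rcases h with h | ⟨hu', hv'⟩
  · exact hH.2 h
  · exact hΩ (hC.nbhd_subset hu') (hC.nbhd_subset hv') huv

lemma IsMinTri.eq_glue (hH : IsMinTri G H) (hΩ : H.IsClique Ω) :
    H = glue G Ω fun C => inducedOn H (closedNbhd G C) :=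
  (hH.2 _ (isTri_glue (triangulatesComps_inducedOn hH.1 hΩ))
    (glue_le hΩ fun _ _ => inducedOn_le)).symm

/-- Replacing one piece of the decomposition `IsMinTri.eq_glue` by a smaller triangulation
of `R(C)` yields a smaller triangulation of `G`. -/
lemma IsMinTri.isMinTriOn_inducedOn (hH : IsMinTri G H) (hΩ : H.IsClique Ω)
    (hC : IsCompOf G Ω C) :
    IsMinTriOn (realization G C) (closedNbhd G C) (inducedOn H (closedNbhd G C)) := by
  have hres := triangulatesComps_inducedOn hH.1 hΩ
  refine ⟨hres C hC, fun K' hK' hK'le => ?_⟩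
  let K := Function.update (fun D => inducedOn H (closedNbhd G D)) C K'
  have hK : TriangulatesComps G Ω K := by
    intro D hD
    by_cases hDC : D = C
    · subst hDC
      simpa [K] using hK'
    · simpa [K, hDC] using hres D hD
  have hle : glue G Ω K ≤ H := by
    refine glue_le hΩ fun D _ => ?_
    by_cases hDC : D = C
    · subst hDC
      simpa [K] using hK'le.trans inducedOn_le
    · simpa [K, hDC] using inducedOn_le
  have heq := hH.2 _ (isTri_glue hK) hle
  refine le_antisymm hK'le fun u v ⟨huv, hu, hv⟩ => ?_
  rw [← heq] at huv
  simpa [K] using glue_adj_of_mem_closedNbhd hK hC hu hv huv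

lemma IsMinTri.adj_cases (hH : IsMinTri G H) (hΩ : H.IsClique Ω) {u v : V}
    (huv : H.Adj u v) : (u ∈ Ω ∧ v ∈ Ω) ∨
      ∃ C, IsCompOf G Ω C ∧ u ∈ closedNbhd G C ∧ v ∈ closedNbhd G C := by
  rw [hH.eq_glue hΩ, glue_adj] at huv
  rcases huv with h | ⟨C, hC, h⟩
  · exact Or.inl h.2
  · exact Or.inr ⟨C, hC, h.2⟩

end Decomposition

section PotentialMaximalCliques

variable {G H : SimpleGraph V} {Ω C : Set V}

lemma isChordalOn_of_adj_except {S : Set V} {u v : V}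
    (hS : ∀ x ∈ S, ∀ y ∈ S, x ≠ y → s(x, y) ≠ s(u, v) → H.Adj x y) : IsChordalOn H S := by
  intro n hn f hf _ hmem
  have hchord (i : ZMod n) := nonconsecutive_add_natCast i (m := 2) le_rfl hn
  have hchord_adj : ∀ i : ZMod n, s(f i, f (i + (2 : ℕ))) ≠ s(u, v) →
      ∃ i j : ZMod n, i ≠ j ∧ j ≠ i + 1 ∧ i ≠ j + 1 ∧ H.Adj (f i) (f j) := fun i h =>
    ⟨i, _, (hchord i).1, (hchord i).2.1, (hchord i).2.2,
      hS _ (hmem _) _ (hmem _) (hf.ne (hchord i).1) h⟩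
  by_cases h0 : s(f 0, f (0 + (2 : ℕ))) = s(u, v)
  · refine hchord_adj 1 fun h1 => ?_
    have h01 : (0 : ZMod n) ≠ 1 := fun h =>
      natCast_ne_zero_of_lt (n := n) (m := 1) one_pos (by omega) (by simpa using h.symm)
    rcases Sym2.eq_iff.mp (h0.trans h1.symm) with ⟨h, -⟩ | ⟨-, h⟩
    · exact h01 (hf h)
    · exact (hchord 0).2.1 (by simpa using hf h)
  · exact hchord_adj 0 h0

lemma IsMinTri.isChordal_deleteEdges (hH : IsMinTri G H) (hΩ : H.IsClique Ω) {u v : V}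
    (hu : u ∈ Ω) (hv : v ∈ Ω) (hsep : ∀ C, IsCompOf G Ω C → u ∈ nbhd G C → v ∉ nbhd G C) :
    IsChordal (H.deleteEdges {s(u, v)}) := by
  have hpair : ∀ C, IsCompOf G Ω C → ∀ x ∈ closedNbhd G C, ∀ y ∈ closedNbhd G C,
      s(x, y) ≠ s(u, v) := by
    intro C hC x hx y hy hxy
    have mem_nbhd := fun {w} (hw : w ∈ Ω) (hw' : w ∈ closedNbhd G C) =>
      hC.inter_closedNbhd_subset_nbhd ⟨hw, hw'⟩
    rcases Sym2.eq_iff.mp hxy with ⟨rfl, rfl⟩ | ⟨rfl, rfl⟩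
    · exact hsep C hC (mem_nbhd hu hx) (mem_nbhd hv hy)
    · exact hsep C hC (mem_nbhd hu hy) (mem_nbhd hv hx)
  refine isChordal_of_isChordalOn_separator (G := G) (Ω := Ω)
    (fun x y hxy => hH.adj_cases hΩ (SimpleGraph.deleteEdges_le _ hxy)) ?_ ?_ ?_
  · exact fun C hC x hx y hy hxy => (SimpleGraph.deleteEdges_adj ..).mpr
      ⟨hΩ (hC.nbhd_subset hx) (hC.nbhd_subset hy) hxy, hpair C hC x (Or.inr hx) y (Or.inr hy)⟩
  · exact isChordalOn_of_adj_except fun x hx y hy hxy h =>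
      (SimpleGraph.deleteEdges_adj ..).mpr ⟨hΩ hx hy hxy, h⟩
  · intro C hC n hn f hf hadj hmem
    obtain ⟨i, j, hij, hji, hij', hchord⟩ := hH.1.1 n hn f hf fun i => (hadj i).1
    exact ⟨i, j, hij, hji, hij', (SimpleGraph.deleteEdges_adj ..).mpr
      ⟨hchord, hpair C hC _ (hmem i) _ (hmem j)⟩⟩

/-- Otherwise deleting the edge `uv` from a minimal triangulation with maximal clique `Ω`
would leave a smaller triangulation. -/
lemma IsPMC.exists_isCompOf_mem_nbhd (hPMC : IsPMC G Ω) {u v : V} (hu : u ∈ Ω) (hv : v ∈ Ω)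
    (huv : u ≠ v) (hG : ¬G.Adj u v) : ∃ C, IsCompOf G Ω C ∧ u ∈ nbhd G C ∧ v ∈ nbhd G C := by
  obtain ⟨H, hH, hΩ, -⟩ := hPMC
  by_contra! hsep
  have hGle : G ≤ H.deleteEdges {s(u, v)} := fun x y hxy =>
    (SimpleGraph.deleteEdges_adj ..).mpr ⟨hH.1.2 hxy, fun h => hG (by
      rcases Sym2.eq_iff.mp h with ⟨rfl, rfl⟩ | ⟨rfl, rfl⟩
      exacts [hxy, hxy.symm])⟩
  have heq := hH.2 _ ⟨hH.isChordal_deleteEdges hΩ hu hv hsep, hGle⟩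
    (SimpleGraph.deleteEdges_le _)
  have huv' := hΩ hu hv huv
  rw [← heq, SimpleGraph.deleteEdges_adj] at huv'
  exact huv'.2 rfl

lemma IsPMC.nbhd_ne [Finite V] (hPMC : IsPMC G Ω) (hC : IsCompOf G Ω C) : nbhd G C ≠ Ω := by
  obtain ⟨H, hH, hΩ, hmax⟩ := hPMC
  intro hfull
  obtain ⟨c, hc, hcΩ⟩ := hH.1.1.exists_forall_adj_of_isClique hH.1.2 Ω.toFinite hΩ
    hC.disjoint.symm hC.connected fun s hs => exists_adj_of_mem_nbhd (hfull ▸ hs)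
  have := hmax _ (hΩ.insert fun b hb _ => hcΩ b hb) (Set.subset_insert c Ω)
  exact hC.notMem hc (this ▸ Set.mem_insert c Ω)

/-- `N(C)` is a minimal separator: a vertex `u ∈ Ω \ N(C)` lies in a second full component. -/
lemma IsPMC.exists_isFullCompOf_ne [Finite V] (hPMC : IsPMC G Ω) (hC : IsCompOf G Ω C) :
    ∃ D, IsFullCompOf G (nbhd G C) D ∧ D ≠ C := by
  obtain ⟨u, huΩ, huS⟩ :=
    Set.not_subset.mp fun h => hPMC.nbhd_ne hC (hC.nbhd_subset.antisymm h)
  obtain ⟨D, hD, huD⟩ := exists_isCompOf_mem (G := G) huS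
  have hsub : ∀ C', IsCompOf G Ω C' → u ∈ nbhd G C' → C' ⊆ D := by
    intro C' hC' hu'
    have hC'S : Disjoint C' (nbhd G C) := hC'.disjoint.mono_right hC.nbhd_subset
    obtain ⟨w, hw, huw⟩ := exists_adj_of_mem_nbhd hu'
    exact hD.subset_of_connected hC'.connected hC'S
      ⟨w, hw, hD.closed huD (Set.disjoint_left.mp hC'S hw) huw⟩
  refine ⟨D, ⟨hD, hD.nbhd_subset.antisymm fun s hs => ?_⟩, fun h => hC.notMem (h ▸ huD) huΩ⟩
  have hsD : s ∉ D := fun h => hD.notMem h hs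
  by_cases hsu : G.Adj s u
  · exact ⟨hsD, u, huD, hsu.symm⟩
  obtain ⟨C', hC', hs', hu'⟩ :=
    hPMC.exists_isCompOf_mem_nbhd (hC.nbhd_subset hs) huΩ (fun h => huS (h ▸ hs)) hsu
  obtain ⟨w, hw, hsw⟩ := exists_adj_of_mem_nbhd hs'
  exact ⟨hsD, w, hsub C' hC' hu' hw, hsw.symm⟩

end PotentialMaximalCliques

section Balance

variable {G H : SimpleGraph V} {Ω C D : Set V} {W : Finset (Set V)}

lemma exists_isMaxClique_superset [Finite V] {S : Set V} (hS : H.IsClique S) :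
    ∃ Ω, S ⊆ Ω ∧ IsMaxClique H Ω := by
  obtain ⟨Ω, hSΩ, hmax⟩ := Finite.exists_le_maximal (p := H.IsClique) hS
  exact ⟨Ω, hSΩ, hmax.1, fun Ω' hΩ' h => (hmax.2 hΩ' h).antisymm h⟩

lemma disjoint_meeting (hW : ∀ K ∈ W, G.IsClique K) (hDC : Disjoint D C)
    (hDN : Disjoint D (nbhd G C)) : Disjoint (meeting W D) (meeting W C) := by
  refine Finset.disjoint_left.mpr fun K hKD hKC => ?_
  simp only [meeting, Finset.mem_filter] at hKD hKC
  obtain ⟨hKW, d, hdK, hdD⟩ := hKD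
  obtain ⟨-, c, hcK, hcC⟩ := hKC
  have hdC : d ∉ C := Set.disjoint_left.mp hDC hdD
  have hcd : G.Adj c d := hW K hKW hcK hdK fun h => hdC (h ▸ hcC)
  exact Set.disjoint_left.mp hDN hdD ⟨hdC, c, hcC, hcd⟩

/-- A component of `G \ Ω'` outside `C` is separated from `C` by `N(C) ⊆ Ω'`, so the cliques of
`W` it meets are disjoint from those meeting `C`, and it cannot be heavy as well. -/
lemma IsTri.exists_isMaxClique_heavy_ssubset [Finite V] (hH : IsTri G H)
    (hW : ∀ K ∈ W, G.IsClique K) (hΩ : IsMaxClique H Ω) (hC : IsCompOf G Ω C)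
    (hheavy : W.card < 2 * (meeting W C).card) :
    ∃ Ω', IsMaxClique H Ω' ∧
      ∀ D, IsCompOf G Ω' D → W.card < 2 * (meeting W D).card → D ⊂ C := by
  have hS : H.IsClique (nbhd G C) := hΩ.1.subset hC.nbhd_subset
  obtain ⟨c, hc, hcS⟩ := hH.1.exists_forall_adj_of_isClique hH.2 (nbhd G C).toFinite hS
    (Set.disjoint_left.mpr fun _ h => h.1) hC.connected fun s hs => exists_adj_of_mem_nbhd hs
  obtain ⟨Ω', hsub, hΩ'⟩ := exists_isMaxClique_superset (hS.insert fun b hb _ => hcS b hb)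
  have hcΩ' : c ∈ Ω' := hsub (Set.mem_insert c _)
  refine ⟨Ω', hΩ', fun D hD hDheavy => ?_⟩
  have hDS : Disjoint D (nbhd G C) :=
    hD.disjoint.mono_right ((Set.subset_insert c _).trans hsub)
  by_cases hDC : (D ∩ C).Nonempty
  · exact ⟨hC.isCompOf_nbhd.subset_of_connected hD.connected hDS hDC,
      fun h => hD.notMem (h hc) hcΩ'⟩
  · have hdisj := disjoint_meeting hW
      (Set.disjoint_iff_inter_eq_empty.mpr (Set.not_nonempty_iff_eq_empty.mp hDC)) hDS
    have := Finset.card_le_card (s := meeting W D ∪ meeting W C)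
      (Finset.union_subset (Finset.filter_subset _ W) (Finset.filter_subset _ W))
    rw [Finset.card_union_of_disjoint hdisj] at this
    omega

lemma IsTri.exists_balanced_isMaxClique [Finite V] (hH : IsTri G H)
    (hW : ∀ K ∈ W, G.IsClique K) :
    ∃ Ω, IsMaxClique H Ω ∧ ∀ C, IsCompOf G Ω C → 2 * (meeting W C).card ≤ W.card := by
  suffices ∀ N : ℕ, ∀ Ω, IsMaxClique H Ω →
      (∀ C, IsCompOf G Ω C → W.card < 2 * (meeting W C).card → C.ncard < N) →
      ∃ Ω', IsMaxClique H Ω' ∧ ∀ C, IsCompOf G Ω' C → 2 * (meeting W C).card ≤ W.card by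
    obtain ⟨Ω, -, hΩ⟩ := exists_isMaxClique_superset (H := H) (S := ∅) (by simp)
    exact this _ Ω hΩ fun C _ _ => Nat.lt_succ_of_le (Set.ncard_le_card C)
  intro N
  induction N with
  | zero => exact fun Ω hΩ hsmall =>
      ⟨Ω, hΩ, fun C hC => not_lt.mp fun h => Nat.not_lt_zero _ (hsmall C hC h)⟩
  | succ N ih =>
    intro Ω hΩ hsmall
    by_cases hbal : ∀ C, IsCompOf G Ω C → 2 * (meeting W C).card ≤ W.card
    · exact ⟨Ω, hΩ, hbal⟩
    obtain ⟨C, hC, hheavy⟩ : ∃ C, IsCompOf G Ω C ∧ W.card < 2 * (meeting W C).card := by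
      simpa using hbal
    obtain ⟨Ω', hΩ', hsub⟩ := hH.exists_isMaxClique_heavy_ssubset hW hΩ hC hheavy
    exact ih Ω' hΩ' fun D hD hDheavy =>
      (Set.ncard_lt_ncard (hsub D hD hDheavy)).trans_le (Nat.lt_succ_iff.mp (hsmall C hC hheavy))

end Balance

section Assembly

variable {G H : SimpleGraph V} {Ω C : Set V} {K : Set V → SimpleGraph V}

/-- `N(C)` has a second full component `D`, and a triangulation below the glue has no edges
between `C` and `D`; so `N(C)` separates in it and is therefore a clique. -/
lemma isClique_nbhd_of_le_glue [Finite V] (hPMC : IsPMC G Ω) (hK : TriangulatesComps G Ω K)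
    (hH : IsTri G H) (hle : H ≤ glue G Ω K) (hC : IsCompOf G Ω C) : H.IsClique (nbhd G C) := by
  obtain ⟨D, ⟨hD, hDfull⟩, hDC⟩ := hPMC.exists_isFullCompOf_ne hC
  have hCD := hC.isCompOf_nbhd.disjoint_of_ne hD hDC.symm
  have hno : ∀ c ∈ C, ∀ d ∈ D, ¬H.Adj c d := fun c hc d hd hcd => by
    rcases ((hK C hC).2.2 c d (glue_adj_of_mem hK hC hc (hle hcd))).2 with h | h
    · exact Set.disjoint_left.mp hCD h hd
    · exact hD.notMem hd h
  intro x hx y hy hxy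
  exact hH.1.adj_of_connected_sets hH.2 hxy hC.connected hD.connected hCD hno
    (exists_adj_of_mem_nbhd hx) (exists_adj_of_mem_nbhd hy)
    (exists_adj_of_mem_nbhd (hDfull.symm ▸ hx)) (exists_adj_of_mem_nbhd (hDfull.symm ▸ hy))

lemma isMinTri_glue [Finite V] (hPMC : IsPMC G Ω)
    (hK : ∀ C, IsCompOf G Ω C → IsMinTriOn (realization G C) (closedNbhd G C) (K C)) :
    IsMinTri G (glue G Ω K) := by
  have hK' : TriangulatesComps G Ω K := fun C hC => (hK C hC).1
  refine ⟨isTri_glue hK', fun H hH hle => hle.antisymm ?_⟩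
  have hΩ : H.IsClique Ω := by
    intro u hu v hv huv
    by_cases hG : G.Adj u v
    · exact hH.2 hG
    obtain ⟨C, hC, huC, hvC⟩ := hPMC.exists_isCompOf_mem_nbhd hu hv huv hG
    exact isClique_nbhd_of_le_glue hPMC hK' hH hle hC huC hvC huv
  refine glue_le hΩ fun C hC => ?_
  have hres := triangulatesComps_inducedOn hH hΩ C hC
  have hres_le : inducedOn H (closedNbhd G C) ≤ K C := fun u v ⟨huv, hu, hv⟩ =>
    glue_adj_of_mem_closedNbhd hK' hC hu hv (hle huv)
  rw [← (hK C hC).2 _ hres hres_le]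
  exact inducedOn_le

end Assembly

theorem min_tri_characterization_general {V : Type*} [Fintype V]
    (G : SimpleGraph V) (W : Finset (Set V)) (hW : IsECC G W)
    (H : SimpleGraph V) :
    IsMinTri G H ↔
      ∃ Ω : Set V, IsPMC G Ω ∧
        (∀ Ci : Set V, IsCompOf G Ω Ci → 2 * (meeting W Ci).card ≤ W.card) ∧
        ∃ F : Set V → SimpleGraph V,
          (∀ Ci : Set V, IsCompOf G Ω Ci →
            IsMinTriOn (realization G Ci) (closedNbhd G Ci) (F Ci)) ∧
          H = cliqueOn Ω ⊔ ⨆ Ci ∈ {D : Set V | IsCompOf G Ω D}, F Ci := by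
  constructor
  · intro hH
    obtain ⟨Ω, hΩ, hbal⟩ := hH.1.exists_balanced_isMaxClique hW.1
    exact ⟨Ω, ⟨H, hH, hΩ⟩, hbal, fun C => inducedOn H (closedNbhd G C),
      fun C hC => hH.isMinTriOn_inducedOn hΩ.1 hC, hH.eq_glue hΩ.1⟩
  · rintro ⟨Ω, hPMC, -, F, hF, rfl⟩
    exact isMinTri_glue hPMC hF

/-- `H` is a minimal triangulation of `G` iff it is assembled from a PMC
`Ω` whose components `Ci` all satisfy `|W[Ci]| ≤ |W| / 2` together with minimal
triangulations of the realizations `R(Ci)`. -/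
theorem min_tri_characterization {V : Type*} [Fintype V]
    (G : SimpleGraph V) (hG : G.Connected) (W : Finset (Set V)) (hW : IsECC G W)
    (H : SimpleGraph V) :
    IsMinTri G H ↔
      ∃ Ω : Set V, IsPMC G Ω ∧
        (∀ Ci : Set V, IsCompOf G Ω Ci → 2 * (meeting W Ci).card ≤ W.card) ∧
        ∃ F : Set V → SimpleGraph V,
          (∀ Ci : Set V, IsCompOf G Ω Ci →
            IsMinTriOn (realization G Ci) (closedNbhd G Ci) (F Ci)) ∧
          H = cliqueOn Ω ⊔ ⨆ Ci ∈ {D : Set V | IsCompOf G Ω D}, F Ci :=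
  min_tri_characterization_general G W hW H

end PaperECC
end

section
/- For every positive integer cc, let G be the graph whose vertices are the nonempty proper subsets of {1,…,cc}, with two distinct subsets adjacent if and only if they intersect. Then (1) the cc sets W_i = {S : i ∈ S}, for 1 ≤ i ≤ cc, form an edge clique cover of G of size cc, and (2) G has no module M with 2 ≤ |M| < |V(G)| = 2^cc − 2. -/
/-!
A vertex `X` of the subset graph that meets `A` but misses `B` is adjacent to `A` and not to `B`,
so every module containing `A` and `B` contains `X`. Starting from two distinct members of a
module `M`, an element of their difference puts two singletons `{i}`, `{j}` into `M`. For any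
other `k`, the pair `{i, k}` meets `{i}` and misses `{j}`, and then `{k}` meets `{i, k}` and misses
`{j}`, so all singletons lie in `M`. Finally, any `C` meets `{c}` for `c ∈ C` and misses `{d}` for
`d ∉ C`, hence `M` is the whole vertex set.
-/

open scoped Classical

namespace PaperECC

variable {V : Type*}

/-- The graph whose vertices are nonempty proper subsets of `{1, …, cc}`,
two distinct subsets being adjacent iff they intersect. -/
def subsetGraph (cc : ℕ) :
    SimpleGraph {S : Finset (Fin cc) // S.Nonempty ∧ S ≠ Finset.univ} :=
  SimpleGraph.fromRel (fun A B => (A.1 ∩ B.1).Nonempty)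

theorem IsModule.mem_of_adj_of_not_adj {G : SimpleGraph V} {M : Set V} (hM : IsModule G M)
    {a b x : V} (ha : a ∈ M) (hb : b ∈ M) (hxa : G.Adj x a) (hxb : ¬G.Adj x b) : x ∈ M := by
  by_contra hx
  rcases hM x hx with h | h
  · exact hxb (h b hb)
  · exact h a ha hxa

abbrev ProperSubset (α : Type*) [Fintype α] :=
  {S : Finset α // S.Nonempty ∧ S ≠ Finset.univ}

def properSubsetGraph (α : Type*) [Fintype α] [DecidableEq α] :
    SimpleGraph (ProperSubset α) :=
  SimpleGraph.fromRel (fun A B => (A.1 ∩ B.1).Nonempty)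

section ProperSubsetGraph

open Finset

variable {α : Type*} [Fintype α]

def ProperSubset.ofNotMem (S : Finset α) (hS : S.Nonempty) {x : α} (hx : x ∉ S) :
    ProperSubset α :=
  ⟨S, hS, fun h => hx (h ▸ mem_univ x)⟩

@[simp]
theorem ProperSubset.val_ofNotMem (S : Finset α) (hS : S.Nonempty) {x : α} (hx : x ∉ S) :
    (ProperSubset.ofNotMem S hS hx).1 = S :=
  rfl

variable [DecidableEq α]

theorem properSubsetGraph_adj {A B : ProperSubset α} :
    (properSubsetGraph α).Adj A B ↔ A ≠ B ∧ (A.1 ∩ B.1).Nonempty := by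
  simp [properSubsetGraph, inter_comm]

theorem card_properSubset : Fintype.card (ProperSubset α) = 2 ^ Fintype.card α - 2 := by
  rcases isEmpty_or_nonempty α with hα | hα
  · have : IsEmpty (ProperSubset α) := ⟨fun S => isEmptyElim S.2.1.choose⟩
    simp
  rw [Fintype.card_subtype]
  have hfilter :
      univ.filter (fun S : Finset α => S.Nonempty ∧ S ≠ univ) = univ \ {∅, univ} := by
    ext S
    simp [nonempty_iff_ne_empty]
  rw [hfilter, card_sdiff_of_subset (subset_univ _), card_pair univ_nonempty.ne_empty.symm,
    card_univ, Fintype.card_finset]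

theorem isECC_properSubsetGraph :
    IsECC (properSubsetGraph α) (univ.image fun i => {A : ProperSubset α | i ∈ A.1}) := by
  refine ⟨?_, fun A B hAB => ?_⟩
  · rintro _ hK
    obtain ⟨i, -, rfl⟩ := mem_image.1 hK
    exact fun A hA B hB hAB => properSubsetGraph_adj.2 ⟨hAB, i, mem_inter.2 ⟨hA, hB⟩⟩
  · obtain ⟨i, hi⟩ := (properSubsetGraph_adj.1 hAB).2
    exact ⟨_, mem_image_of_mem _ (mem_univ i), mem_inter.1 hi⟩

theorem card_image_setOf_mem :
    (univ.image fun i => {A : ProperSubset α | i ∈ A.1}).card = Fintype.card α := by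
  refine (card_image_of_injective _ fun i j hij => ?_).trans card_univ
  by_contra hne
  have hj : j ∉ ({i} : Finset α) := by simpa using Ne.symm hne
  have hji : j = i := by
    simpa using congrArg (ProperSubset.ofNotMem {i} (singleton_nonempty i) hj ∈ ·) hij
  exact hne hji.symm

variable {M : Set (ProperSubset α)}

theorem IsModule.mem_of_meets_of_disjoint (hM : IsModule (properSubsetGraph α) M)
    {A B X : ProperSubset α} (hA : A ∈ M) (hB : B ∈ M) (hXA : (X.1 ∩ A.1).Nonempty)
    (hXB : Disjoint X.1 B.1) : X ∈ M := by
  by_cases hX : X = A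
  · exact hX ▸ hA
  refine hM.mem_of_adj_of_not_adj hA hB (properSubsetGraph_adj.2 ⟨hX, hXA⟩) fun h => ?_
  exact (properSubsetGraph_adj.1 h).2.ne_empty (disjoint_iff_inter_eq_empty.1 hXB)

theorem IsModule.exists_singletons_mem (hM : IsModule (properSubsetGraph α) M)
    {A B : ProperSubset α} (hA : A ∈ M) (hB : B ∈ M) (hAB : A ≠ B) :
    ∃ i j : α, i ≠ j ∧ {i} ∈ Subtype.val '' M ∧ {j} ∈ Subtype.val '' M := by
  wlog hAB' : ¬A.1 ⊆ B.1 generalizing A B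
  · exact this hB hA hAB.symm fun hBA => hAB (Subtype.ext (Subset.antisymm (not_not.1 hAB') hBA))
  obtain ⟨i, hiA, hiB⟩ := not_subset.1 hAB'
  obtain ⟨j, hjB⟩ := B.2.1
  have hij : i ≠ j := fun h => hiB (h ▸ hjB)
  have hPi : ProperSubset.ofNotMem {i} (singleton_nonempty i)
      (by simpa using hij.symm : j ∉ ({i} : Finset α)) ∈ M :=
    hM.mem_of_meets_of_disjoint hA hB ⟨i, by simp [hiA]⟩ (by simpa using hiB)
  have hPj : ProperSubset.ofNotMem {j} (singleton_nonempty j)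
      (by simpa using hij : i ∉ ({j} : Finset α)) ∈ M :=
    hM.mem_of_meets_of_disjoint hB hPi ⟨j, by simp [hjB]⟩ (by simpa using hij.symm)
  exact ⟨i, j, hij, ⟨_, hPi, rfl⟩, ⟨_, hPj, rfl⟩⟩

theorem IsModule.singleton_mem_of_singletons_mem (hM : IsModule (properSubsetGraph α) M)
    {i j : α} (hij : i ≠ j) (hi : {i} ∈ Subtype.val '' M) (hj : {j} ∈ Subtype.val '' M)
    (k : α) : {k} ∈ Subtype.val '' M := by
  obtain ⟨Pi, hPi, hPi_eq⟩ := hi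
  obtain ⟨Pj, hPj, hPj_eq⟩ := hj
  rcases eq_or_ne k j with rfl | hkj
  · exact ⟨Pj, hPj, hPj_eq⟩
  have hjik : j ∉ ({i, k} : Finset α) := by simp [hij.symm, hkj.symm]
  have hQ : ProperSubset.ofNotMem {i, k} (insert_nonempty i {k}) hjik ∈ M :=
    hM.mem_of_meets_of_disjoint hPi hPj ⟨i, by simp [hPi_eq]⟩ (by simpa [hPj_eq] using hjik)
  have hjk : j ∉ ({k} : Finset α) := by simpa using hkj.symm
  have hPk : ProperSubset.ofNotMem {k} (singleton_nonempty k) hjk ∈ M :=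
    hM.mem_of_meets_of_disjoint hQ hPj ⟨k, by simp⟩ (by simpa [hPj_eq] using hkj)
  exact ⟨_, hPk, rfl⟩

theorem IsModule.eq_univ_of_forall_singleton_mem (hM : IsModule (properSubsetGraph α) M)
    (h : ∀ k : α, {k} ∈ Subtype.val '' M) : M = Set.univ := by
  refine Set.eq_univ_of_forall fun C => ?_
  obtain ⟨c, hc⟩ := C.2.1
  obtain ⟨d, hd⟩ : ∃ d, d ∉ C.1 := by simpa [eq_univ_iff_forall] using C.2.2
  obtain ⟨Pc, hPc, hPc_eq⟩ := h c
  obtain ⟨Pd, hPd, hPd_eq⟩ := h d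
  exact hM.mem_of_meets_of_disjoint hPc hPd ⟨c, by simp [hPc_eq, hc]⟩ (by simp [hPd_eq, hd])

theorem IsModule.eq_univ_of_ne (hM : IsModule (properSubsetGraph α) M) {A B : ProperSubset α}
    (hA : A ∈ M) (hB : B ∈ M) (hAB : A ≠ B) : M = Set.univ := by
  obtain ⟨i, j, hij, hi, hj⟩ := hM.exists_singletons_mem hA hB hAB
  exact hM.eq_univ_of_forall_singleton_mem (hM.singleton_mem_of_singletons_mem hij hi hj)

end ProperSubsetGraph

theorem subset_graph_no_module_general (cc : ℕ) :
    IsECC (subsetGraph cc)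
      (Finset.image
        (fun i : Fin cc =>
          ({A : {S : Finset (Fin cc) // S.Nonempty ∧ S ≠ Finset.univ} | i ∈ A.1} : Set _))
        Finset.univ) ∧
    (Finset.image
        (fun i : Fin cc =>
          ({A : {S : Finset (Fin cc) // S.Nonempty ∧ S ≠ Finset.univ} | i ∈ A.1} : Set _))
        Finset.univ).card = cc ∧
    Fintype.card {S : Finset (Fin cc) // S.Nonempty ∧ S ≠ Finset.univ} = 2 ^ cc - 2 ∧
    ∀ M : Set {S : Finset (Fin cc) // S.Nonempty ∧ S ≠ Finset.univ},
      IsModule (subsetGraph cc) M →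
      ¬(2 ≤ M.ncard ∧ M.ncard < 2 ^ cc - 2) := by
  have hcard : Fintype.card (ProperSubset (Fin cc)) = 2 ^ cc - 2 := by
    rw [card_properSubset, Fintype.card_fin]
  refine ⟨isECC_properSubsetGraph, card_image_setOf_mem.trans (Fintype.card_fin cc), hcard, ?_⟩
  rintro M hM ⟨htwo, hlt⟩
  obtain ⟨A, B, hA, hB, hAB⟩ := (Set.one_lt_ncard_iff (Set.toFinite M)).1 htwo
  rw [IsModule.eq_univ_of_ne hM hA hB hAB, Set.ncard_univ, Nat.card_eq_fintype_card, hcard] at hlt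
  exact lt_irrefl _ hlt

/-- The sets `Wᵢ = {S : i ∈ S}` form an edge clique cover of size `cc` of
the graph of nonempty proper subsets of `{1, …, cc}` (adjacent iff intersecting), this graph
has `2 ^ cc - 2` vertices, and it has no module `M` with `2 ≤ |M| < 2 ^ cc - 2`. -/
theorem subset_graph_no_module (cc : ℕ) (hcc : 1 ≤ cc) :
    IsECC (subsetGraph cc)
      (Finset.image
        (fun i : Fin cc =>
          ({A : {S : Finset (Fin cc) // S.Nonempty ∧ S ≠ Finset.univ} | i ∈ A.1} : Set _))
        Finset.univ) ∧
    (Finset.image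
        (fun i : Fin cc =>
          ({A : {S : Finset (Fin cc) // S.Nonempty ∧ S ≠ Finset.univ} | i ∈ A.1} : Set _))
        Finset.univ).card = cc ∧
    Fintype.card {S : Finset (Fin cc) // S.Nonempty ∧ S ≠ Finset.univ} = 2 ^ cc - 2 ∧
    ∀ M : Set {S : Finset (Fin cc) // S.Nonempty ∧ S ≠ Finset.univ},
      IsModule (subsetGraph cc) M →
      ¬(2 ≤ M.ncard ∧ M.ncard < 2 ^ cc - 2) :=
  subset_graph_no_module_general cc

end PaperECC
end
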